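/- arXiv:2009.01983 — 2 statements merged into one kernel-verified Lean document; each statement's English description precedes it below -/
import Mathlib

section
/- Let v, w : Ω → ℝ be bounded measurable functions on a measure space (Ω, λ) of finite measure, and let χ : Ω → [0,1] be measurable with ∫ χ e^w dλ > 0. Define probability densities p_v = χe^v / ∫χe^v dλ and p_w = χe^w / ∫χe^w dλ. Then the Hellinger distance satisfies d_H(p_v, p_w) ≤ ‖v − w‖_∞ · e^{‖v−w‖_∞/2}. -/
/-! The Hellinger distance is the `L²` distance between square roots of densities, and
normalizing a density, `f ↦ f / ∫ f`, sends `√f` to the unit vector `√f / ‖√f‖₂`. For unit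
vectors `‖x/‖x‖ - y/‖y‖‖ ≤ 2‖x - y‖/‖y‖`, so it suffices to bound `‖√(χe^v) - √(χe^w)‖₂`.
Pointwise `√(χe^v) - √(χe^w) = √(χe^w) (e^{(v-w)/2} - 1)` and `|e^t - 1| ≤ |t| e^{|t|}`, whence
`‖√(χe^v) - √(χe^w)‖₂ ≤ (M/2) e^{M/2} ‖√(χe^w)‖₂`. -/

open Real

theorem NormedSpace.norm_normalize_sub_normalize_le {V : Type*} [NormedAddCommGroup V]
    [NormedSpace ℝ V] (x : V) {y : V} (hy : y ≠ 0) :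
    ‖normalize x - normalize y‖ ≤ 2 * ‖x - y‖ / ‖y‖ := by
  have hy' : 0 < ‖y‖ := norm_pos_iff.mpr hy
  have hdecomp : normalize x - normalize y = ‖y‖⁻¹ • (x - y) + (‖x‖⁻¹ - ‖y‖⁻¹) • x := by
    simp only [normalize, smul_sub, sub_smul]; abel
  have hrescale : ‖(‖x‖⁻¹ - ‖y‖⁻¹) • x‖ ≤ ‖x - y‖ / ‖y‖ := by
    rcases eq_or_ne x 0 with rfl | hx
    · simp only [smul_zero, norm_zero]; positivity
    have hx' : 0 < ‖x‖ := norm_pos_iff.mpr hx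
    calc ‖(‖x‖⁻¹ - ‖y‖⁻¹) • x‖ = |‖y‖ - ‖x‖| / ‖y‖ := by
          rw [norm_smul, Real.norm_eq_abs, inv_sub_inv hx'.ne' hy'.ne', abs_div,
            abs_of_pos (mul_pos hx' hy')]
          field_simp
      _ ≤ ‖x - y‖ / ‖y‖ := by
          gcongr
          rw [abs_sub_comm]
          exact abs_norm_sub_norm_le x y
  calc ‖normalize x - normalize y‖ ≤ ‖‖y‖⁻¹ • (x - y)‖ + ‖(‖x‖⁻¹ - ‖y‖⁻¹) • x‖ := by
        rw [hdecomp]; exact norm_add_le _ _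
    _ ≤ ‖x - y‖ / ‖y‖ + ‖x - y‖ / ‖y‖ := by
        gcongr
        rw [norm_smul, norm_inv, norm_norm, inv_mul_eq_div]
    _ = 2 * ‖x - y‖ / ‖y‖ := by ring

theorem Real.abs_exp_sub_one_le_abs_mul_exp_abs (t : ℝ) : |exp t - 1| ≤ |t| * exp |t| := by
  rcases le_or_gt 0 t with ht | ht
  · have : 1 - t ≤ exp (-t) := by linarith [add_one_le_exp (-t)]
    rw [abs_of_nonneg ht, abs_of_nonneg (by linarith [one_le_exp ht])]
    nlinarith [exp_pos t, exp_neg t, mul_inv_cancel₀ (exp_pos t).ne']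
  · rw [abs_of_neg ht, abs_of_nonpos (by linarith [exp_lt_one_iff.mpr ht])]
    nlinarith [add_one_le_exp t, one_le_exp (neg_nonneg.mpr ht.le)]

theorem sq_sqrt_mul_exp_sub_sqrt_mul_exp_le {c s t M : ℝ} (hc : 0 ≤ c) (h : |s - t| ≤ M) :
    (√(c * exp s) - √(c * exp t)) ^ 2 ≤ (M / 2 * exp (M / 2)) ^ 2 * (c * exp t) := by
  have hst : |(s - t) / 2| ≤ M / 2 := by rw [abs_div, abs_two]; linarith
  have hfactor : √(c * exp s) - √(c * exp t) = √(c * exp t) * (exp ((s - t) / 2) - 1) := by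
    rw [sqrt_mul hc, sqrt_mul hc, ← exp_half, ← exp_half, mul_sub, mul_one, mul_assoc,
      ← exp_add]
    ring_nf
  have hkey : |exp ((s - t) / 2) - 1| ≤ M / 2 * exp (M / 2) :=
    (abs_exp_sub_one_le_abs_mul_exp_abs _).trans <|
      mul_le_mul hst (exp_le_exp.mpr hst) (exp_pos _).le ((abs_nonneg _).trans hst)
  rw [hfactor, mul_pow, sq_sqrt (mul_nonneg hc (exp_pos t).le), mul_comm (_ ^ 2)]
  exact mul_le_mul_of_nonneg_left (sq_le_sq' (abs_le.mp hkey).1 (abs_le.mp hkey).2)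
    (mul_nonneg hc (exp_pos t).le)

namespace MeasureTheory

noncomputable def hellingerDist {Ω : Type*} [MeasurableSpace Ω] (μ : Measure Ω)
    (p q : Ω → ℝ) : ℝ :=
  √(∫ x, (√(p x) - √(q x)) ^ 2 ∂μ)

variable {Ω : Type*} [MeasurableSpace Ω] {μ : Measure Ω} {f g : Ω → ℝ}

theorem MemLp.norm_toLp_two_eq_sqrt_integral_sq (hf : MemLp f 2 μ) :
    ‖hf.toLp f‖ = √(∫ x, f x ^ 2 ∂μ) := by
  rw [← sqrt_sq (norm_nonneg _), ← real_inner_self_eq_norm_sq, L2.inner_def]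
  congr 1
  refine integral_congr_ae ?_
  filter_upwards [hf.coeFn_toLp] with x hx
  simp [hx, sq]

theorem Integrable.memLp_two_sqrt (hf : Integrable f μ) (hf0 : 0 ≤ᵐ[μ] f) :
    MemLp (fun x => √(f x)) 2 μ := by
  refine (memLp_two_iff_integrable_sq
    (continuous_sqrt.comp_aestronglyMeasurable hf.aestronglyMeasurable)).mpr ?_
  refine hf.congr ?_
  filter_upwards [hf0] with x hx
  exact (sq_sqrt hx).symm

theorem hellingerDist_eq_norm_toLp_sub (hf : Integrable f μ) (hg : Integrable g μ)
    (hf0 : 0 ≤ᵐ[μ] f) (hg0 : 0 ≤ᵐ[μ] g) :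
    hellingerDist μ f g =
      ‖(hf.memLp_two_sqrt hf0).toLp _ - (hg.memLp_two_sqrt hg0).toLp _‖ := by
  rw [← MemLp.toLp_sub, MemLp.norm_toLp_two_eq_sqrt_integral_sq]
  rfl

theorem Integrable.norm_toLp_sqrt (hf : Integrable f μ) (hf0 : 0 ≤ᵐ[μ] f) :
    ‖(hf.memLp_two_sqrt hf0).toLp _‖ = √(∫ x, f x ∂μ) := by
  rw [MemLp.norm_toLp_two_eq_sqrt_integral_sq]
  congr 1
  refine integral_congr_ae ?_
  filter_upwards [hf0] with x hx
  exact sq_sqrt hx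

theorem toLp_sqrt_div_integral_eq_normalize (hf : Integrable f μ) (hf0 : 0 ≤ᵐ[μ] f)
    (hf0' : 0 ≤ᵐ[μ] fun x => f x / ∫ y, f y ∂μ) :
    ((hf.div_const _).memLp_two_sqrt hf0').toLp _ =
      NormedSpace.normalize ((hf.memLp_two_sqrt hf0).toLp _) := by
  rw [NormedSpace.normalize.eq_1, hf.norm_toLp_sqrt hf0, ← MemLp.toLp_const_smul]
  refine MemLp.toLp_congr _ _ (ae_of_all _ fun x => ?_)
  simp only [Pi.smul_apply, smul_eq_mul]
  rw [sqrt_div' _ (integral_nonneg_of_ae hf0), div_eq_inv_mul]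

theorem hellingerDist_div_integral_le (hf : Integrable f μ) (hg : Integrable g μ)
    (hf0 : 0 ≤ᵐ[μ] f) (hg0 : 0 ≤ᵐ[μ] g) (hg_pos : 0 < ∫ x, g x ∂μ) :
    hellingerDist μ (fun x => f x / ∫ y, f y ∂μ) (fun x => g x / ∫ y, g y ∂μ) ≤
      2 * hellingerDist μ f g / √(∫ x, g x ∂μ) := by
  have hf0' := hf0.mono fun x hx => div_nonneg hx (integral_nonneg_of_ae hf0)
  have hg0' := hg0.mono fun x hx => div_nonneg hx hg_pos.le
  have hg_ne : (hg.memLp_two_sqrt hg0).toLp _ ≠ 0 := by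
    rw [← norm_pos_iff, hg.norm_toLp_sqrt hg0]
    exact sqrt_pos.mpr hg_pos
  rw [hellingerDist_eq_norm_toLp_sub (hf.div_const _) (hg.div_const _) hf0' hg0',
    toLp_sqrt_div_integral_eq_normalize hf hf0 hf0',
    toLp_sqrt_div_integral_eq_normalize hg hg0 hg0', hellingerDist_eq_norm_toLp_sub hf hg hf0 hg0,
    ← hg.norm_toLp_sqrt hg0]
  exact NormedSpace.norm_normalize_sub_normalize_le _ hg_ne

theorem hellingerDist_le_of_sq_sub_le (hf : Integrable f μ) (hg : Integrable g μ)
    (hf0 : 0 ≤ᵐ[μ] f) (hg0 : 0 ≤ᵐ[μ] g) {K : ℝ} (hK : 0 ≤ K)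
    (h : ∀ᵐ x ∂μ, (√(f x) - √(g x)) ^ 2 ≤ K ^ 2 * g x) :
    hellingerDist μ f g ≤ K * √(∫ x, g x ∂μ) := by
  have hint : Integrable (fun x => (√(f x) - √(g x)) ^ 2) μ :=
    ((hf.memLp_two_sqrt hf0).sub (hg.memLp_two_sqrt hg0)).integrable_sq
  calc hellingerDist μ f g ≤ √(∫ x, K ^ 2 * g x ∂μ) :=
        sqrt_le_sqrt (integral_mono_ae hint (hg.const_mul _) h)
    _ = K * √(∫ x, g x ∂μ) := by
        rw [integral_const_mul, sqrt_mul (sq_nonneg _), sqrt_sq hK]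

end MeasureTheory

open MeasureTheory

theorem hellinger_bound_exponential_densities_general
    {Ω : Type*} [MeasurableSpace Ω] (lam : Measure Ω)
    (v w χ : Ω → ℝ)
    (hχ01 : ∀ x, χ x ∈ Set.Icc (0 : ℝ) 1)
    (hposv : 0 < ∫ x, χ x * Real.exp (v x) ∂lam)
    (hposw : 0 < ∫ x, χ x * Real.exp (w x) ∂lam)
    (M : ℝ) (hM : ∀ x, |v x - w x| ≤ M) :
    Real.sqrt (∫ x,
        (Real.sqrt (χ x * Real.exp (v x) / ∫ y, χ y * Real.exp (v y) ∂lam) -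
         Real.sqrt (χ x * Real.exp (w x) / ∫ y, χ y * Real.exp (w y) ∂lam)) ^ 2 ∂lam)
      ≤ M * Real.exp (M / 2) := by
  have hnonneg (u : Ω → ℝ) : 0 ≤ᵐ[lam] fun x => χ x * exp (u x) :=
    ae_of_all _ fun x => mul_nonneg (hχ01 x).1 (exp_pos _).le
  have hint_v : Integrable (fun x => χ x * exp (v x)) lam := .of_integral_ne_zero hposv.ne'
  have hint_w : Integrable (fun x => χ x * exp (w x)) lam := .of_integral_ne_zero hposw.ne'
  have hM0 : 0 ≤ M := by
    obtain ⟨x⟩ : Nonempty Ω := by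
      by_contra h
      rw [not_nonempty_iff] at h
      exact hposw.ne' integral_of_isEmpty
    exact (abs_nonneg _).trans (hM x)
  calc _ = hellingerDist lam (fun x => χ x * exp (v x) / ∫ y, χ y * exp (v y) ∂lam)
          (fun x => χ x * exp (w x) / ∫ y, χ y * exp (w y) ∂lam) := rfl
    _ ≤ 2 * hellingerDist lam (fun x => χ x * exp (v x)) (fun x => χ x * exp (w x)) /
          √(∫ x, χ x * exp (w x) ∂lam) :=
        hellingerDist_div_integral_le hint_v hint_w (hnonneg v) (hnonneg w) hposw
    _ ≤ 2 * (M / 2 * exp (M / 2) * √(∫ x, χ x * exp (w x) ∂lam)) /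
          √(∫ x, χ x * exp (w x) ∂lam) := by
        gcongr
        exact hellingerDist_le_of_sq_sub_le hint_v hint_w (hnonneg v) (hnonneg w) (by positivity)
          (ae_of_all _ fun x => sq_sqrt_mul_exp_sub_sqrt_mul_exp_le (hχ01 x).1 (hM x))
    _ = M * exp (M / 2) := by
        field_simp [(sqrt_pos.mpr hposw).ne']

/-- Hellinger distance bound for normalized exponential densities:
`d_H(p_v, p_w) ≤ ‖v − w‖_∞ e^{‖v−w‖_∞/2}`. -/
theorem hellinger_bound_exponential_densities
    {Ω : Type*} [MeasurableSpace Ω] (lam : Measure Ω) [IsFiniteMeasure lam]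
    (v w χ : Ω → ℝ) (hv : Measurable v) (hw : Measurable w) (hχ : Measurable χ)
    (hvB : ∃ C, ∀ x, |v x| ≤ C) (hwB : ∃ C, ∀ x, |w x| ≤ C)
    (hχ01 : ∀ x, χ x ∈ Set.Icc (0 : ℝ) 1)
    (hposv : 0 < ∫ x, χ x * Real.exp (v x) ∂lam)
    (hposw : 0 < ∫ x, χ x * Real.exp (w x) ∂lam)
    (M : ℝ) (hM : ∀ x, |v x - w x| ≤ M) :
    Real.sqrt (∫ x,
        (Real.sqrt (χ x * Real.exp (v x) / ∫ y, χ y * Real.exp (v y) ∂lam) -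
         Real.sqrt (χ x * Real.exp (w x) / ∫ y, χ y * Real.exp (w y) ∂lam)) ^ 2 ∂lam)
      ≤ M * Real.exp (M / 2) :=
  hellinger_bound_exponential_densities_general lam v w χ hχ01 hposv hposw M hM
end

section
/- Let (Ω, λ) be a finite measure space, v, w bounded measurable functions, χ : Ω → [0,1] measurable with positive integrals ∫χe^v, ∫χe^w, and p_v, p_w the normalized densities χe^v/∫χe^v, χe^w/∫χe^w. Then KL(p_v ‖ p_w) ≤ C · ‖v−w‖_∞² · e^{‖v−w‖_∞} · (1 + 2‖v−w‖_∞) for some universal constant C. -/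
open MeasureTheory

lemma exp_sub_one_le_mul (x : ℝ) : Real.exp x - 1 ≤ x * Real.exp x := by
  have h := Real.add_one_le_exp (-x)
  have h2 : Real.exp (-x) = (Real.exp x)⁻¹ := Real.exp_neg x
  have h3 : (0:ℝ) < Real.exp x := Real.exp_pos x
  have h4 := mul_le_mul_of_nonneg_right h h3.le
  rw [h2, inv_mul_cancel₀ h3.ne'] at h4
  nlinarith

lemma exp_le_quad (t : ℝ) : Real.exp t ≤ 1 + t + t ^ 2 * Real.exp |t| := by
  rcases le_or_gt 0 t with ht | ht
  · rw [abs_of_nonneg ht]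
    have h := exp_sub_one_le_mul t
    nlinarith [mul_nonneg ht (sub_nonneg.mpr h), Real.exp_pos t]
  · rw [abs_of_neg ht]
    have h1 : Real.exp t * (1 - t) ≤ 1 := by
      have h := Real.add_one_le_exp (-t)
      have h2 : Real.exp (-t) = (Real.exp t)⁻¹ := Real.exp_neg t
      rw [h2] at h
      have h3 : (0:ℝ) < Real.exp t := Real.exp_pos t
      calc Real.exp t * (1 - t) ≤ Real.exp t * (Real.exp t)⁻¹ := by
            apply mul_le_mul_of_nonneg_left _ h3.le
            linarith
        _ = 1 := mul_inv_cancel₀ h3.ne'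
    have h4 : Real.exp t ≤ 1 + t + t ^ 2 := by nlinarith [Real.exp_pos t]
    have h5 : (1:ℝ) ≤ Real.exp (-t) := Real.one_le_exp (by linarith)
    nlinarith [sq_nonneg t]

/-- There is a universal constant `C` such that for normalized exponential densities
`p_v = χ e^v / ∫ χ e^v` and `p_w = χ e^w / ∫ χ e^w` on a finite measure space,
`KL(p_v ‖ p_w) ≤ C ‖v−w‖_∞² e^{‖v−w‖_∞} (1 + 2‖v−w‖_∞)`. -/
theorem kl_bound_exponential_densities :
    ∃ C : ℝ, 0 < C ∧
      ∀ (Ω : Type) (_ : MeasurableSpace Ω) (lam : Measure Ω), IsFiniteMeasure lam →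
        ∀ (v w χ : Ω → ℝ), Measurable v → Measurable w → Measurable χ →
          (∃ B, ∀ x, |v x| ≤ B) → (∃ B, ∀ x, |w x| ≤ B) →
          (∀ x, χ x ∈ Set.Icc (0 : ℝ) 1) →
          (0 < ∫ x, χ x * Real.exp (v x) ∂lam) →
          (0 < ∫ x, χ x * Real.exp (w x) ∂lam) →
          ∀ M : ℝ, (∀ x, |v x - w x| ≤ M) →
            ∫ x, (χ x * Real.exp (v x) / ∫ y, χ y * Real.exp (v y) ∂lam) *
                Real.log ((χ x * Real.exp (v x) / ∫ y, χ y * Real.exp (v y) ∂lam) /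
                  (χ x * Real.exp (w x) / ∫ y, χ y * Real.exp (w y) ∂lam)) ∂lam ≤
              C * M ^ 2 * Real.exp M * (1 + 2 * M) := by
  refine ⟨1, one_pos, ?_⟩
  intro Ω mΩ lam hfin v w χ hv hw hχm hvB hwB hχ hZv hZw M hM
  obtain ⟨Bv, hBv⟩ := hvB
  obtain ⟨Bw, hBw⟩ := hwB
  -- M is nonnegative
  have hΩ : Nonempty Ω := by
    by_contra h
    have : IsEmpty Ω := not_nonempty_iff.mp h
    rw [lam.eq_zero_of_isEmpty] at hZv
    simp at hZv
  have hM0 : 0 ≤ M := le_trans (abs_nonneg _) (hM hΩ.some)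
  set Zv := ∫ x, χ x * Real.exp (v x) ∂lam with hZvdef
  set Zw := ∫ x, χ x * Real.exp (w x) ∂lam with hZwdef
  set f : Ω → ℝ := fun x => v x - w x with hfdef
  -- integrability helper
  have intable : ∀ (g : Ω → ℝ), Measurable g → ∀ C : ℝ, (∀ x, |g x| ≤ C) →
      Integrable g lam := by
    intro g hg C hC
    refine ⟨hg.aestronglyMeasurable, ?_⟩
    exact HasFiniteIntegral.of_bounded (C := C)
      (Filter.Eventually.of_forall (by simpa [Real.norm_eq_abs] using hC))
  have hχ0 : ∀ x, 0 ≤ χ x := fun x => (hχ x).1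
  have hχ1 : ∀ x, χ x ≤ 1 := fun x => (hχ x).2
  have habsχe : ∀ (u : Ω → ℝ) (B : ℝ), (∀ x, |u x| ≤ B) →
      ∀ x, |χ x * Real.exp (u x)| ≤ Real.exp B := by
    intro u B hB x
    rw [abs_mul, abs_of_nonneg (hχ0 x), abs_of_pos (Real.exp_pos _)]
    calc χ x * Real.exp (u x) ≤ 1 * Real.exp (u x) :=
          mul_le_mul_of_nonneg_right (hχ1 x) (Real.exp_pos _).le
      _ = Real.exp (u x) := one_mul _
      _ ≤ Real.exp B := Real.exp_le_exp.mpr (le_trans (le_abs_self _) (hB x))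
  have hmeas1 : Measurable (fun x => χ x * Real.exp (v x)) :=
    hχm.mul (Real.measurable_exp.comp hv)
  have hmeas2 : Measurable (fun x => χ x * Real.exp (w x)) :=
    hχm.mul (Real.measurable_exp.comp hw)
  have hfm : Measurable f := hv.sub hw
  have I1 : Integrable (fun x => χ x * Real.exp (v x)) lam :=
    intable _ hmeas1 _ (habsχe v Bv hBv)
  have I2 : Integrable (fun x => χ x * Real.exp (w x)) lam :=
    intable _ hmeas2 _ (habsχe w Bw hBw)
  have I3 : Integrable (fun x => χ x * Real.exp (v x) * f x) lam := by
    refine intable _ (hmeas1.mul hfm) (Real.exp Bv * M) (fun x => ?_)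
    rw [abs_mul]
    exact mul_le_mul (habsχe v Bv hBv x) (hM x) (abs_nonneg _) (Real.exp_pos _).le
  have I4 : Integrable (fun x => χ x * Real.exp (v x) * f x ^ 2) lam := by
    refine intable _ (hmeas1.mul (hfm.pow_const 2)) (Real.exp Bv * M ^ 2) (fun x => ?_)
    rw [abs_mul]
    refine mul_le_mul (habsχe v Bv hBv x) ?_ (abs_nonneg _) (Real.exp_pos _).le
    rw [abs_pow]
    exact pow_le_pow_left₀ (abs_nonneg _) (hM x) 2
  have hZvpos : 0 < Zv := hZv
  have hZwpos : 0 < Zw := hZw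
  set c : ℝ := Real.log Zw - Real.log Zv with hcdef
  -- Step A: pointwise identity for the KL integrand
  have stepA : ∀ x, (χ x * Real.exp (v x) / Zv) *
      Real.log ((χ x * Real.exp (v x) / Zv) / (χ x * Real.exp (w x) / Zw)) =
      χ x * Real.exp (v x) * (f x + c) / Zv := by
    intro x
    rcases eq_or_lt_of_le (hχ0 x) with h0 | hpos
    · simp [← h0]
    · have hb : (0:ℝ) < χ x * Real.exp (w x) := mul_pos hpos (Real.exp_pos _)
      have hratio : (χ x * Real.exp (v x) / Zv) / (χ x * Real.exp (w x) / Zw)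
          = Real.exp (f x) * (Zw / Zv) := by
        rw [hfdef]
        simp only [Real.exp_sub]
        field_simp
      rw [hratio, Real.log_mul (Real.exp_ne_zero _)
        (div_pos hZwpos hZvpos).ne', Real.log_exp,
        Real.log_div hZwpos.ne' hZvpos.ne']
      rw [hcdef]
      ring
  -- compute the KL integral
  have hKL : (∫ x, (χ x * Real.exp (v x) / Zv) *
      Real.log ((χ x * Real.exp (v x) / Zv) / (χ x * Real.exp (w x) / Zw)) ∂lam)
      = (∫ x, χ x * Real.exp (v x) * f x ∂lam) / Zv + c := by
    rw [integral_congr_ae (Filter.Eventually.of_forall stepA)]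
    rw [MeasureTheory.integral_div]
    have : (fun x => χ x * Real.exp (v x) * (f x + c))
        = fun x => χ x * Real.exp (v x) * f x + (χ x * Real.exp (v x)) * c := by
      funext x; ring
    have Imulc : Integrable (fun x => (χ x * Real.exp (v x)) * c) lam := I1.mul_const c
    rw [this, integral_add I3 Imulc,
      integral_mul_const c (fun x => χ x * Real.exp (v x)), ← hZvdef]
    field_simp
  set F : ℝ := ∫ x, χ x * Real.exp (v x) * f x ∂lam with hFdef
  -- Step B/C: Zw ≤ Zv - F + exp M * M^2 * Zv
  have hQ : ∫ x, χ x * Real.exp (v x) * f x ^ 2 ∂lam ≤ M ^ 2 * Zv := by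
    rw [hZvdef, ← integral_const_mul]
    refine integral_mono I4 (I1.const_mul _) (fun x => ?_)
    have h1 : f x ^ 2 ≤ M ^ 2 := by
      have := sq_abs (f x)
      nlinarith [hM x, abs_nonneg (f x)]
    have h2 : 0 ≤ χ x * Real.exp (v x) := mul_nonneg (hχ0 x) (Real.exp_pos _).le
    calc χ x * Real.exp (v x) * f x ^ 2 ≤ χ x * Real.exp (v x) * M ^ 2 :=
          mul_le_mul_of_nonneg_left h1 h2
      _ = M ^ 2 * (χ x * Real.exp (v x)) := by ring
  have hZwle : Zw ≤ Zv - F + Real.exp M * (M ^ 2 * Zv) := by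
    have hpt : ∀ x, χ x * Real.exp (w x) ≤
        χ x * Real.exp (v x) * (1 - f x + f x ^ 2 * Real.exp M) := by
      intro x
      have hrw : χ x * Real.exp (w x) = χ x * Real.exp (v x) * Real.exp (-f x) := by
        have : Real.exp (v x) * Real.exp (-f x) = Real.exp (w x) := by
          rw [← Real.exp_add]; congr 1; simp [hfdef]
        rw [mul_assoc, this]
      rw [hrw]
      have h2 : 0 ≤ χ x * Real.exp (v x) := mul_nonneg (hχ0 x) (Real.exp_pos _).le
      refine mul_le_mul_of_nonneg_left ?_ h2
      have := exp_le_quad (-f x)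
      have habs : Real.exp |(-f x)| ≤ Real.exp M :=
        Real.exp_le_exp.mpr (by rw [abs_neg]; exact hM x)
      nlinarith [sq_nonneg (f x)]
    have hIrhs : Integrable (fun x =>
        χ x * Real.exp (v x) * (1 - f x + f x ^ 2 * Real.exp M)) lam := by
      have : (fun x => χ x * Real.exp (v x) * (1 - f x + f x ^ 2 * Real.exp M))
          = fun x => (χ x * Real.exp (v x) - χ x * Real.exp (v x) * f x)
            + (χ x * Real.exp (v x) * f x ^ 2) * Real.exp M := by
        funext x; ring
      rw [this]
      exact (I1.sub I3).add (I4.mul_const _)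
    have hint := integral_mono I2 hIrhs hpt
    rw [← hZwdef] at hint
    refine le_trans hint ?_
    have : (fun x => χ x * Real.exp (v x) * (1 - f x + f x ^ 2 * Real.exp M))
        = fun x => (χ x * Real.exp (v x) - χ x * Real.exp (v x) * f x)
          + (χ x * Real.exp (v x) * f x ^ 2) * Real.exp M := by
      funext x; ring
    have Isub : Integrable (fun x => χ x * Real.exp (v x) - χ x * Real.exp (v x) * f x) lam :=
      I1.sub I3
    have Imul : Integrable (fun x => (χ x * Real.exp (v x) * f x ^ 2) * Real.exp M) lam :=
      I4.mul_const _
    rw [this, integral_add Isub Imul, integral_sub I1 I3,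
      integral_mul_const (Real.exp M) (fun x => χ x * Real.exp (v x) * f x ^ 2),
      ← hZvdef, ← hFdef]
    have := hQ
    nlinarith [Real.exp_pos M]
  -- Step D: conclude
  have hc : c ≤ Zw / Zv - 1 := by
    rw [hcdef, ← Real.log_div hZwpos.ne' hZvpos.ne']
    exact Real.log_le_sub_one_of_pos (div_pos hZwpos hZvpos)
  have hdiv : Zw / Zv ≤ 1 - F / Zv + Real.exp M * M ^ 2 := by
    have h1 : Zw / Zv ≤ (Zv - F + Real.exp M * (M ^ 2 * Zv)) / Zv := by
      gcongr
    refine le_trans h1 ?_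
    rw [div_le_iff₀ hZvpos]
    field_simp
    ring_nf
    nlinarith [hZvpos]
  rw [hKL]
  have hfinal : F / Zv + c ≤ Real.exp M * M ^ 2 := by
    have := le_trans hc (by linarith : Zw / Zv - 1 ≤ - (F / Zv) + Real.exp M * M ^ 2)
    linarith
  refine le_trans hfinal ?_
  have hE : 0 < Real.exp M := Real.exp_pos M
  nlinarith [sq_nonneg M, mul_nonneg (mul_nonneg (sq_nonneg M) hE.le) hM0]
end
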